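/- arXiv:2402.13891 — 2 statements merged into one kernel-verified Lean document; each statement's English description precedes it below -/
import Mathlib

section
/- Let Q be a measure on a measurable space X, β : X → ℝ a nonnegative measurable function with ∫β² dQ < ∞, and P := Q.withDensity β (so dP = β dQ). Define the KuLSIF risk of a measurable function f by R(f) := (1/2)∫(−f) dP + (1/2)∫ f²/2 dQ. Then for every f with ∫f² dQ < ∞, R(f) − R(β) = (1/4)∫(β − f)² dQ; that is, the excess risk equals one half of the Bregman divergence B_F(β, f) = (1/2)∫(β − f)² dQ generated by the quadratic functional F(h) = ∫(h−1)²/2 dQ. -/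
open MeasureTheory
open scoped NNReal ENNReal

/-- KuLSIF excess risk equals one half of the Bregman divergence: with `dP = β dQ`,
`R(f) = (1/2)∫ -f dP + (1/2)∫ f²/2 dQ`, one has
`R(f) - R(β) = (1/4)∫ (β - f)² dQ`. -/
theorem stmt8 {X : Type*} [MeasurableSpace X] (Q : Measure X) (β : X → ℝ)
    (hβmeas : Measurable β) (hβnonneg : ∀ x, 0 ≤ β x)
    (hβ2 : Integrable (fun x => (β x) ^ 2) Q)
    (f : X → ℝ) (hfmeas : Measurable f) (hf2 : Integrable (fun x => (f x) ^ 2) Q) :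
    let P : Measure X := Q.withDensity (fun x => ENNReal.ofReal (β x))
    let R : (X → ℝ) → ℝ := fun g =>
      (1 / 2) * ∫ x, (-(g x)) ∂P + (1 / 2) * ∫ x, (g x) ^ 2 / 2 ∂Q
    R f - R β = (1 / 4) * ∫ x, (β x - f x) ^ 2 ∂Q := by
  intro P R
  -- rewrite withDensity integrals
  have hdens : (fun x => ENNReal.ofReal (β x)) = fun x => ((Real.toNNReal (β x) : ℝ≥0) : ℝ≥0∞) := by
    funext x; rfl
  have htn : Measurable fun x => Real.toNNReal (β x) := hβmeas.real_toNNReal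
  have hP : ∀ g : X → ℝ, ∫ x, g x ∂P = ∫ x, β x * g x ∂Q := by
    intro g
    show ∫ x, g x ∂(Q.withDensity (fun x => ENNReal.ofReal (β x))) = _
    rw [hdens, integral_withDensity_eq_integral_smul htn]
    congr 1; funext x
    simp [NNReal.smul_def, Real.coe_toNNReal _ (hβnonneg x)]
  -- integrability of β * f and β * β
  have hβf : Integrable (fun x => β x * f x) Q := by
    refine Integrable.mono' ((hβ2.add hf2).div_const 2) ((hβmeas.mul hfmeas).aestronglyMeasurable) ?_
    filter_upwards with x
    have : |β x * f x| ≤ (β x ^ 2 + f x ^ 2) / 2 := by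
      rw [abs_mul]
      nlinarith [abs_nonneg (β x), abs_nonneg (f x), sq_abs (β x), sq_abs (f x),
        sq_nonneg (|β x| - |f x|)]
    simpa [abs_mul] using this
  have hββ : Integrable (fun x => β x * β x) Q := by
    simpa [sq] using hβ2
  have hsub : Integrable (fun x => (β x - f x) ^ 2) Q := by
    have hA : Integrable (fun x => β x * β x - β x * f x) Q := hββ.sub hβf
    have hB : Integrable (fun x => β x * β x - β x * f x - β x * f x) Q := hA.sub hβf
    have hC : Integrable (fun x => β x * β x - β x * f x - β x * f x + f x ^ 2) Q := hB.add hf2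
    have : (fun x => (β x - f x) ^ 2)
        = fun x => β x * β x - β x * f x - β x * f x + f x ^ 2 := by
      funext x; ring
    rw [this]; exact hC
  have h1 : ∫ x, (-(f x)) ∂P = - ∫ x, β x * f x ∂Q := by
    rw [show ∫ x, (-(f x)) ∂P = ∫ x, (fun x => -(f x)) x ∂P from rfl, hP]
    rw [← integral_neg]; congr 1; funext x; ring
  have h2 : ∫ x, (-(β x)) ∂P = - ∫ x, β x * β x ∂Q := by
    rw [show ∫ x, (-(β x)) ∂P = ∫ x, (fun x => -(β x)) x ∂P from rfl, hP]
    rw [← integral_neg]; congr 1; funext x; ring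
  have h3 : ∫ x, (f x) ^ 2 / 2 ∂Q = (∫ x, (f x) ^ 2 ∂Q) / 2 := integral_div 2 _
  have h4 : ∫ x, (β x) ^ 2 / 2 ∂Q = (∫ x, (β x) ^ 2 ∂Q) / 2 := integral_div 2 _
  have hexp : ∫ x, (β x - f x) ^ 2 ∂Q
      = (∫ x, β x * β x ∂Q) - (∫ x, β x * f x ∂Q) - (∫ x, β x * f x ∂Q) + ∫ x, (f x) ^ 2 ∂Q := by
    have e1 : ∀ x, (β x - f x) ^ 2 = β x * β x - β x * f x - β x * f x + f x ^ 2 :=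
      fun x => by ring
    simp_rw [e1]
    have hA : Integrable (fun x => β x * β x - β x * f x) Q := hββ.sub hβf
    have hB : Integrable (fun x => β x * β x - β x * f x - β x * f x) Q := hA.sub hβf
    rw [integral_add hB hf2, integral_sub hA hβf, integral_sub hββ hβf]
  have hββ' : ∫ x, (β x) ^ 2 ∂Q = ∫ x, β x * β x ∂Q := by
    congr 1; funext x; ring
  show (1 / 2) * ∫ x, (-(f x)) ∂P + (1 / 2) * ∫ x, (f x) ^ 2 / 2 ∂Q
      - ((1 / 2) * ∫ x, (-(β x)) ∂P + (1 / 2) * ∫ x, (β x) ^ 2 / 2 ∂Q)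
      = (1 / 4) * ∫ x, (β x - f x) ^ 2 ∂Q
  rw [h1, h2, h3, h4, hexp, hββ']
  ring
end

section
/- Let Q be a measure on a measurable space X, β : X → ℝ a measurable function with β(x) > 0 for Q-almost every x, and P := Q.withDensity β. Define the logistic risk R(f) := (1/2)∫log(1 + e^{−f}) dP + (1/2)∫log(1 + e^{f}) dQ. Assume f is measurable and that the functions β·f, β·log β, (1+β)·log(1+β), and (1+β)·log(1+e^{f}) are Q-integrable. Then R(f) − R(log∘β) = (1/2)∫[ (1+β)·log((1 + e^{f})/(1 + β)) − β·(f − log β) ] dQ, the right side being one half of the Bregman divergence B_F(β, e^f) generated by F(h) = ∫[h·log h − (1+h)·log(1+h)] dQ. -/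
/-!
Since `log (1 + e^{-v}) = log (1 + e^v) - v` and `dP = β dQ`, the risk of any score `g` is the
`Q`-integral of `((1 + β) log (1 + e^g) - β g) / 2`. At `g = log β` this integrand is
`((1 + β) log (1 + β) - β log β) / 2`, and subtracting the two integrands pointwise gives the
claimed one.
-/

open MeasureTheory

lemma Real.log_one_add_exp_neg (v : ℝ) :
    Real.log (1 + Real.exp (-v)) = Real.log (1 + Real.exp v) - v := by
  have h : 1 + Real.exp (-v) = (1 + Real.exp v) * Real.exp (-v) := by
    rw [add_mul, one_mul, ← Real.exp_add, add_neg_cancel, Real.exp_zero, add_comm]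
  rw [h, Real.log_mul (by positivity) (Real.exp_ne_zero _), Real.log_exp]
  ring

/-- `b ℓ(1, v) + ℓ(-1, v)` for the logistic loss `ℓ`: twice the risk of the score `v` at a point
where `dP/dQ = b`. -/
noncomputable def logisticPointwiseRisk (b v : ℝ) : ℝ :=
  (1 + b) * Real.log (1 + Real.exp v) - b * v

lemma logisticPointwiseRisk_sub_log {b : ℝ} (hb : 0 < b) (v : ℝ) :
    logisticPointwiseRisk b v - logisticPointwiseRisk b (Real.log b)
      = (1 + b) * Real.log ((1 + Real.exp v) / (1 + b)) - b * (v - Real.log b) := by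
  rw [logisticPointwiseRisk, logisticPointwiseRisk, Real.exp_log hb,
    Real.log_div (by positivity) (by positivity)]
  ring

namespace MeasureTheory

variable {X : Type*} [MeasurableSpace X] {Q : Measure X}

lemma integral_withDensity_ofReal {β : X → ℝ} (hβmeas : Measurable β) (hβ : ∀ᵐ x ∂Q, 0 ≤ β x)
    (g : X → ℝ) :
    ∫ x, g x ∂Q.withDensity (fun x => ENNReal.ofReal (β x)) = ∫ x, β x * g x ∂Q := by
  rw [integral_withDensity_eq_integral_toReal_smul₀ hβmeas.ennreal_ofReal.aemeasurable
    (ae_of_all _ fun _ => ENNReal.ofReal_lt_top)]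
  refine integral_congr_ae ?_
  filter_upwards [hβ] with x hx
  simp [ENNReal.toReal_ofReal hx]

lemma Integrable.of_mul_of_one_le {w φ : X → ℝ} (hwφ : Integrable (fun x => w x * φ x) Q)
    (hφ : AEStronglyMeasurable φ Q) (hw : ∀ᵐ x ∂Q, 1 ≤ w x) : Integrable φ Q := by
  refine hwφ.mono hφ ?_
  filter_upwards [hw] with x hx
  rw [norm_mul, Real.norm_of_nonneg (zero_le_one.trans hx)]
  exact le_mul_of_one_le_left (norm_nonneg _) hx

lemma integral_logisticLoss_withDensity {β g : X → ℝ} (hβmeas : Measurable β)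
    (hβ : ∀ᵐ x ∂Q, 0 ≤ β x) (hg : Measurable g) (hβg : Integrable (fun x => β x * g x) Q)
    (hloss : Integrable (fun x => (1 + β x) * Real.log (1 + Real.exp (g x))) Q) :
    ∫ x, Real.log (1 + Real.exp (-g x)) ∂Q.withDensity (fun x => ENNReal.ofReal (β x))
        + ∫ x, Real.log (1 + Real.exp (g x)) ∂Q
      = ∫ x, logisticPointwiseRisk (β x) (g x) ∂Q := by
  have hlog : Integrable (fun x => Real.log (1 + Real.exp (g x))) Q := by
    refine hloss.of_mul_of_one_le (measurable_const.add hg.exp).log.aestronglyMeasurable ?_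
    filter_upwards [hβ] with x hx
    linarith
  rw [integral_withDensity_ofReal hβmeas hβ, ← integral_add _ hlog]
  · congr 1 with x
    rw [Real.log_one_add_exp_neg, logisticPointwiseRisk]
    ring
  · refine ((hloss.sub hlog).sub hβg).congr (ae_of_all _ fun x => ?_)
    simp only [Pi.sub_apply, Real.log_one_add_exp_neg]
    ring

end MeasureTheory

/-- LR excess risk equals one half of the Bregman divergence generated by
`F(h) = ∫ [h log h - (1+h) log(1+h)] dQ`: with `dP = β dQ`, `β > 0` a.e., and
`R(f) = (1/2)∫ log(1+e^{-f}) dP + (1/2)∫ log(1+e^f) dQ`, one has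
`R(f) - R(log β) = (1/2)∫ [(1+β) log((1+e^f)/(1+β)) - β (f - log β)] dQ`. -/
theorem stmt10 {X : Type*} [MeasurableSpace X] (Q : Measure X) (β : X → ℝ)
    (hβmeas : Measurable β) (hβpos : ∀ᵐ x ∂Q, 0 < β x)
    (f : X → ℝ) (hfmeas : Measurable f)
    (h1 : Integrable (fun x => β x * f x) Q)
    (h2 : Integrable (fun x => β x * Real.log (β x)) Q)
    (h3 : Integrable (fun x => (1 + β x) * Real.log (1 + β x)) Q)
    (h4 : Integrable (fun x => (1 + β x) * Real.log (1 + Real.exp (f x))) Q) :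
    let P : Measure X := Q.withDensity (fun x => ENNReal.ofReal (β x))
    let R : (X → ℝ) → ℝ := fun g =>
      (1 / 2) * ∫ x, Real.log (1 + Real.exp (-(g x))) ∂P
        + (1 / 2) * ∫ x, Real.log (1 + Real.exp (g x)) ∂Q
    R f - R (fun x => Real.log (β x))
      = (1 / 2) * ∫ x,
          ((1 + β x) * Real.log ((1 + Real.exp (f x)) / (1 + β x))
            - β x * (f x - Real.log (β x))) ∂Q := by
  intro P R
  have hβ : ∀ᵐ x ∂Q, 0 ≤ β x := hβpos.mono fun x hx => hx.le
  have h3' : Integrable (fun x => (1 + β x) * Real.log (1 + Real.exp (Real.log (β x)))) Q := by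
    refine h3.congr ?_
    filter_upwards [hβpos] with x hx
    rw [Real.exp_log hx]
  have hRf := integral_logisticLoss_withDensity hβmeas hβ hfmeas h1 h4
  have hRβ := integral_logisticLoss_withDensity hβmeas hβ hβmeas.log h2 h3'
  have hf : Integrable (fun x => logisticPointwiseRisk (β x) (f x)) Q := h4.sub h1
  have hlogβ : Integrable (fun x => logisticPointwiseRisk (β x) (Real.log (β x))) Q := h3'.sub h2
  simp only [R, P, ← mul_add, hRf, hRβ, ← mul_sub]
  rw [← integral_sub hf hlogβ]
  congr 1
  refine integral_congr_ae ?_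
  filter_upwards [hβpos] with x hx
  exact logisticPointwiseRisk_sub_log hx (f x)
end
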